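/- Let α, β, a, b > 0 and k, l ∈ ℕ with αβ = 2al. Then for every t ∈ ℝ, the composition of triangle waveforms satisfies T_l(T_k(t; α, β); a, b) = T_{2kl}(t; a/β, bβ). -/

import Mathlib

/-!
On its support `[-2αk, 2αk)` the waveform `T_k(·; α, β)` is the `2α`-periodic triangle wave, and
on `[0, 2al] = [0, αβ]`, which contains the range of the inner wave, `T_l(·; a, b)` is the
`2a`-periodic one. An even `2a`-periodic function `f` satisfies `f (T(s; α, β)) = f (βs)` for
`s ∈ [0, 2α]`, because `T(s; α, β)` is `βs` or `2αβ - βs` and `2αβ = 4al` is a multiple of `2a`.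
Finally, rescaling time by `β` turns `t ↦ f (βt)` into the periodic triangle wave with parameters
`a/β, bβ`.
-/

open Real
open scoped BigOperators

/-- The triangle function `T(t; α, β)`: equals `βt` on `[0, α]`, `2αβ - βt` on `(α, 2α]`,
and `0` otherwise. -/
noncomputable def tri (α β t : ℝ) : ℝ :=
  if 0 ≤ t ∧ t ≤ α then β * t
  else if α < t ∧ t ≤ 2 * α then 2 * α * β - β * t
  else 0

/-- The triangle waveform `T_k(t; α, β) = Σ_{i=-k+1}^{k} T(t - 2α(i-1); α, β)`. -/
noncomputable def triWave (k : ℕ) (α β t : ℝ) : ℝ :=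
  ∑ i ∈ Finset.Icc (-(k : ℤ) + 1) (k : ℤ), tri α β (t - 2 * α * ((i : ℝ) - 1))

open Set Function

lemma tri_eq_mul_max_min (α β t : ℝ) : tri α β t = β * max 0 (min t (2 * α - t)) := by
  unfold tri
  split_ifs with h₁ h₂
  · rw [min_eq_left (by linarith), max_eq_right h₁.1]
  · rw [min_eq_right (by linarith), max_eq_right (by linarith)]; ring
  · rw [not_and_or, not_le, not_le] at h₁
    rw [not_and_or, not_lt, not_le] at h₂
    rw [max_eq_left, mul_zero]
    rcases h₁ with h₁ | h₁
    · exact (min_le_left _ _).trans h₁.le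
    · exact (min_le_right _ _).trans (by rcases h₂ with h₂ | h₂ <;> linarith)

lemma tri_two_mul_sub (α β t : ℝ) : tri α β (2 * α - t) = tri α β t := by
  simp only [tri_eq_mul_max_min, sub_sub_cancel, min_comm]

lemma tri_eq_zero_of_notMem_Ico {α β t : ℝ} (ht : t ∉ Ico 0 (2 * α)) : tri α β t = 0 := by
  rw [mem_Ico, not_and_or, not_le, not_lt] at ht
  rw [tri_eq_mul_max_min, max_eq_left, mul_zero]
  rcases ht with ht | ht
  · exact (min_le_left _ _).trans ht.le
  · exact (min_le_right _ _).trans (by linarith)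

lemma tri_mem_Icc {α β : ℝ} (hα : 0 ≤ α) (hβ : 0 ≤ β) (t : ℝ) : tri α β t ∈ Icc 0 (α * β) := by
  rw [tri_eq_mul_max_min, mul_comm α]
  have hmin : min t (2 * α - t) ≤ α := by
    rcases le_total t α with h | h
    · exact min_le_of_left_le h
    · exact min_le_of_right_le (by linarith)
  exact ⟨by positivity, mul_le_mul_of_nonneg_left (max_le hα hmin) hβ⟩

lemma tri_eq_or {α β t : ℝ} (ht : t ∈ Icc 0 (2 * α)) :
    tri α β t = β * t ∨ tri α β t = 2 * α * β - β * t := by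
  rw [tri_eq_mul_max_min, max_eq_right (le_min ht.1 (by linarith [ht.2]))]
  rcases min_choice t (2 * α - t) with h | h <;> rw [h]
  · exact .inl rfl
  · exact .inr (by ring)

lemma tri_div {a b c : ℝ} (hc : 0 < c) (x : ℝ) : tri (a / c) (b * c) (x / c) = tri a b x := by
  have hmin : min (x / c) (2 * (a / c) - x / c) = min x (2 * a - x) / c := by
    rw [← min_div_div_right hc.le]; ring_nf
  have hmax : max 0 (min x (2 * a - x) / c) = max 0 (min x (2 * a - x)) / c := by
    rw [← max_div_div_right hc.le, zero_div]
  rw [tri_eq_mul_max_min, tri_eq_mul_max_min, hmin, hmax]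
  field_simp

lemma Int.floor_div_eq_iff_sub_mul_mem_Ico {p : ℝ} (hp : 0 < p) (t : ℝ) (m : ℤ) :
    ⌊t / p⌋ = m ↔ t - p * m ∈ Ico 0 p := by
  rw [Int.floor_eq_iff, le_div_iff₀ hp, div_lt_iff₀ hp, mem_Ico]
  constructor <;> rintro ⟨h₁, h₂⟩ <;> constructor <;> linarith

noncomputable def triPeriodic (α β t : ℝ) : ℝ := tri α β (t - 2 * α * ⌊t / (2 * α)⌋)

section triPeriodic

variable {α β : ℝ}

lemma triPeriodic_eq_tri_sub (hα : 0 < α) {t : ℝ} {m : ℤ} (hm : t - 2 * α * m ∈ Ico 0 (2 * α)) :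
    triPeriodic α β t = tri α β (t - 2 * α * m) := by
  rw [triPeriodic, (Int.floor_div_eq_iff_sub_mul_mem_Ico (by positivity) t m).2 hm]

lemma sub_mul_floor_div_mem_Ico (hα : 0 < α) (t : ℝ) :
    t - 2 * α * ⌊t / (2 * α)⌋ ∈ Ico 0 (2 * α) :=
  (Int.floor_div_eq_iff_sub_mul_mem_Ico (by positivity) t _).1 rfl

lemma triPeriodic_periodic (hα : 0 < α) : Periodic (triPeriodic α β) (2 * α) := by
  intro t
  set m := ⌊t / (2 * α)⌋
  have hshift : t + 2 * α - 2 * α * ((m + 1 : ℤ) : ℝ) = t - 2 * α * m := by push_cast; ring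
  rw [triPeriodic_eq_tri_sub hα (hshift ▸ sub_mul_floor_div_mem_Ico hα t), hshift]
  rfl

lemma triPeriodic_even (hα : 0 < α) : (triPeriodic α β).Even := by
  intro t
  set m := ⌊t / (2 * α)⌋
  have hm := sub_mul_floor_div_mem_Ico hα t
  change triPeriodic α β (-t) = tri α β (t - 2 * α * m)
  rcases hm.1.eq_or_lt with hs | hs
  · have hneg : -t - 2 * α * ((-m : ℤ) : ℝ) = t - 2 * α * m := by push_cast; linarith
    rw [triPeriodic_eq_tri_sub hα (hneg ▸ hm), hneg]
  · have hneg : -t - 2 * α * ((-m - 1 : ℤ) : ℝ) = 2 * α - (t - 2 * α * m) := by push_cast; ring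
    rw [triPeriodic_eq_tri_sub hα (m := -m - 1) (by rw [hneg]; constructor <;> linarith [hm.2]),
      hneg, tri_two_mul_sub]

lemma triPeriodic_zero (hα : 0 < α) : triPeriodic α β 0 = 0 := by
  rw [triPeriodic_eq_tri_sub hα (m := 0) (by simpa using hα), tri_eq_mul_max_min]
  simp

lemma triPeriodic_mem_Icc (hα : 0 < α) (hβ : 0 ≤ β) (t : ℝ) :
    triPeriodic α β t ∈ Icc 0 (α * β) :=
  tri_mem_Icc hα.le hβ _

lemma triPeriodic_div {a b c : ℝ} (ha : 0 < a) (hc : 0 < c) (t : ℝ) :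
    triPeriodic (a / c) (b * c) t = triPeriodic a b (c * t) := by
  set m := ⌊c * t / (2 * a)⌋
  have hm := sub_mul_floor_div_mem_Ico ha (c * t)
  have hscale : t - 2 * (a / c) * m = (c * t - 2 * a * m) / c := by field_simp
  have hmem : t - 2 * (a / c) * m ∈ Ico 0 (2 * (a / c)) := by
    rw [hscale, mul_div_assoc']
    exact ⟨div_nonneg hm.1 hc.le, div_lt_div_of_pos_right hm.2 hc⟩
  rw [triPeriodic_eq_tri_sub (by positivity) hmem, hscale, tri_div hc]
  rfl

lemma _root_.Function.Periodic.comp_triPeriodic {f : ℝ → ℝ} {p : ℝ} (hf : Periodic f p)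
    (hfe : f.Even) (hα : 0 < α) {l : ℤ} (h : α * β = p * l) (t : ℝ) :
    f (triPeriodic α β t) = f (β * t) := by
  set m := ⌊t / (2 * α)⌋
  have hm := sub_mul_floor_div_mem_Ico hα t
  set s := t - 2 * α * m
  have hβt : β * t = β * s + ((2 * l * m : ℤ) : ℝ) * p := by
    push_cast; linear_combination (2 * (m : ℝ)) * h
  rw [triPeriodic_eq_tri_sub hα hm, hβt, hf.int_mul _ _]
  rcases tri_eq_or (β := β) ⟨hm.1, hm.2.le⟩ with hs | hs <;> rw [hs]
  have hreflect : 2 * α * β - β * s = ((2 * l : ℤ) : ℝ) * p - β * s := by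
    push_cast; linear_combination 2 * h
  rw [hreflect, (hf.int_mul _).sub_eq', hfe]

end triPeriodic

lemma triWave_eq_indicator {α : ℝ} (hα : 0 < α) (k : ℕ) (β t : ℝ) :
    triWave k α β t = (Ico (-(2 * α * k)) (2 * α * k)).indicator (triPeriodic α β) t := by
  set m := ⌊t / (2 * α)⌋ with hm_def
  have hterm (i : ℤ) :
      tri α β (t - 2 * α * ((i : ℝ) - 1)) = if i = m + 1 then triPeriodic α β t else 0 := by
    split_ifs with hi
    · subst hi; rw [triPeriodic, ← hm_def]; push_cast; ring_nf
    · refine tri_eq_zero_of_notMem_Ico fun hmem => hi ?_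
      have hfloor := (Int.floor_div_eq_iff_sub_mul_mem_Ico (p := 2 * α) (by positivity) t (i - 1)).2
        (by push_cast; exact hmem)
      omega
  have hmem : m + 1 ∈ Finset.Icc (-(k : ℤ) + 1) k ↔ t ∈ Ico (-(2 * α * k)) (2 * α * k) := by
    have h2α : (0 : ℝ) < 2 * α := by positivity
    have hlower : -(k : ℤ) + 1 ≤ m + 1 ↔ -(2 * α * k) ≤ t := by
      rw [add_le_add_iff_right, Int.le_floor, le_div_iff₀ h2α]; push_cast; ring_nf
    have hupper : m + 1 ≤ (k : ℤ) ↔ t < 2 * α * k := by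
      rw [Int.add_one_le_iff, Int.floor_lt, div_lt_iff₀ h2α]; push_cast; rw [mul_comm]
    rw [Finset.mem_Icc, mem_Ico, hlower, hupper]
  rw [triWave, Finset.sum_congr rfl fun i _ => hterm i, Finset.sum_ite_eq', indicator_apply]
  exact if_congr hmem rfl rfl

lemma triWave_eq_triPeriodic_of_mem_Icc {a : ℝ} (ha : 0 < a) (l : ℕ) (b : ℝ) {S : ℝ}
    (hS : S ∈ Icc 0 (2 * a * l)) : triWave l a b S = triPeriodic a b S := by
  rw [triWave_eq_indicator ha]
  rcases hS.2.lt_or_eq with hlt | rfl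
  · exact indicator_of_mem (mem_Ico.2 ⟨(neg_nonpos.2 (by positivity)).trans hS.1, hlt⟩) _
  · rw [indicator_of_notMem (fun h => h.2.false), mul_comm, (triPeriodic_periodic ha).nat_mul_eq,
      triPeriodic_zero ha]

theorem triWave_comp_general (α β a b : ℝ) (hα : 0 < α) (hβ : 0 < β) (ha : 0 < a)
    (k l : ℕ) (h : α * β = 2 * a * (l : ℝ)) (t : ℝ) :
    triWave l a b (triWave k α β t) = triWave (2 * k * l) (a / β) (b * β) t := by
  have hrange : 2 * (a / β) * ((2 * k * l : ℕ) : ℝ) = 2 * α * k := by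
    push_cast; field_simp; linear_combination -(k : ℝ) * h
  rw [triWave_eq_indicator hα, triWave_eq_indicator (div_pos ha hβ), hrange]
  by_cases ht : t ∈ Ico (-(2 * α * k)) (2 * α * k)
  · have hS : triPeriodic α β t ∈ Icc 0 (2 * a * l) := h ▸ triPeriodic_mem_Icc hα hβ.le t
    rw [indicator_of_mem ht, indicator_of_mem ht, triWave_eq_triPeriodic_of_mem_Icc ha l b hS,
      (triPeriodic_periodic ha).comp_triPeriodic (triPeriodic_even ha) hα (l := l)
        (by exact_mod_cast h), triPeriodic_div ha hβ]
  · rw [indicator_of_notMem ht, indicator_of_notMem ht,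
      triWave_eq_triPeriodic_of_mem_Icc ha l b ⟨le_rfl, by positivity⟩, triPeriodic_zero ha]

/-- **Composition of triangle waveforms (frequency multiplication).** If `αβ = 2al`, then
for every `t ∈ ℝ`, `T_l(T_k(t; α, β); a, b) = T_{2kl}(t; a/β, bβ)`. -/
theorem triWave_comp (α β a b : ℝ) (hα : 0 < α) (hβ : 0 < β) (ha : 0 < a) (hb : 0 < b)
    (k l : ℕ) (h : α * β = 2 * a * (l : ℝ)) (t : ℝ) :
    triWave l a b (triWave k α β t) = triWave (2 * k * l) (a / β) (b * β) t :=
  triWave_comp_general α β a b hα hβ ha k l h t
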